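/- arXiv:0905.4875 — 5 statements merged into one kernel-verified Lean document; each statement's English description precedes it below -/
import Mathlib

section
/- Let (R^{(ρ)})_{ρ≤η} be a resolution family with R^{(0)} = ≼, z ∈ a^{<ω}\{∅}, and enumerate {z^ρ : ρ ≤ η} as z^{ξ_n} ≺ z^{ξ_{n-1}} ≺ ... ≺ z^{ξ_1} with ξ_1 < ... < ξ_n = η. Then for 1 ≤ i < n, the ordinal η_i := {ρ ≤ η : z^{ξ_i} ≼ z^ρ} (viewed as an ordinal, i.e., an initial segment of ordinals ≤ η) is a successor ordinal. -/
def IsTreeRel {a : Type*} (R : List a → List a → Prop) : Prop :=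
  (∀ s, R s s) ∧ (∀ s t, R s t → R t s → s = t) ∧
  (∀ s t u, R s t → R t u → R s u) ∧ (∀ t, R [] t) ∧
  (∀ t, {s | R s t}.Finite) ∧
  (∀ t s s', R s t → R s' t → R s s' ∨ R s' s)

def IsResolutionFamily {a : Type*} (η : Ordinal)
    (R : Ordinal → List a → List a → Prop) : Prop :=
  (∀ ρ ≤ η, IsTreeRel (R ρ)) ∧
  (∀ ρ < η, ∀ s t, R (ρ + 1) s t → R ρ s t) ∧
  (∀ ρ < η, ∀ s t u, R ρ s t → R ρ t u → R (ρ + 1) s u → R (ρ + 1) s t) ∧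
  (∀ l ≤ η, Order.IsSuccLimit l → ∀ s t, R l s t ↔ ∀ ρ < l, R ρ s t)

def IsMaxIdx {a : Type*} (R : List a → List a → Prop) (z : List a) (r : ℕ) : Prop :=
  r < z.length ∧ R (z.take r) z ∧ ∀ r' < z.length, R (z.take r') z → r' ≤ r

/-!
The prefixes `z^ρ` shrink as `ρ` grows, and they are continuous at limits: as their lengths
are natural numbers they stabilise at some `ρ₀ < ν` below a limit `ν ≤ η`, so `z^{ρ₀} R^{(σ)} z`
for all `σ < ν`, hence `z^{ρ₀} R^{(ν)} z` and `z^{ρ₀} ≼ z^ν`. The set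
`{ρ ≤ η : z^{ξ_i} ≼ z^ρ}` is therefore a bounded initial segment of the ordinals that contains
every limit all of whose predecessors it contains, so it has a largest element.
-/

open Order Set

theorem IsLowerSet.exists_eq_Iic {α : Type*} [LinearOrder α] [WellFoundedLT α] [SuccOrder α]
    [NoMaxOrder α] {s : Set α} (hs : IsLowerSet s) (hne : s.Nonempty) (hbdd : BddAbove s)
    (hlim : ∀ a, IsSuccLimit a → Iio a ⊆ s → a ∈ s) : ∃ a, s = Iic a := by
  obtain ⟨m, rfl⟩ : ∃ m, s = Iio m :=
    hs.eq_univ_or_Iio.resolve_left fun h => not_bddAbove_univ (h ▸ hbdd)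
  by_cases hm : IsSuccPrelimit m
  · have hmin : ¬IsMin m := fun h => hne.elim fun b hb => h.not_lt hb
    exact absurd (hlim m ⟨hmin, hm⟩ subset_rfl) (lt_irrefl m)
  · obtain ⟨μ, -, rfl⟩ := not_isSuccPrelimit_iff_succ_eq.mp hm
    exact ⟨μ, Iio_succ μ⟩

namespace IsResolutionFamily

variable {a : Type*} {η : Ordinal} {R : Ordinal → List a → List a → Prop}

theorem rel_anti (hres : IsResolutionFamily η R) {ρ ρ' : Ordinal} (hρ : ρ ≤ ρ') (hρ' : ρ' ≤ η)
    {s t : List a} (hst : R ρ' s t) : R ρ s t := by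
  induction ρ' using WellFoundedLT.induction with
  | _ ρ' ih =>
    rcases hρ.eq_or_lt with rfl | hlt
    · exact hst
    rcases Ordinal.zero_or_succ_or_isSuccLimit ρ' with rfl | ⟨μ, rfl⟩ | hlim
    · exact absurd hlt not_lt_zero
    · have hμ : μ < η := succ_le_iff.mp hρ'
      refine ih μ (lt_succ μ) (le_of_lt_succ hlt) hμ.le (hres.2.1 μ hμ s t ?_)
      rwa [← succ_eq_add_one]
    · exact (hres.2.2.2 ρ' hρ' hlim s t).mp hst ρ hlt

end IsResolutionFamily

def IsMaxRestriction {a : Type*} (η : Ordinal) (R : Ordinal → List a → List a → Prop)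
    (z : List a) (zrho : Ordinal → List a) : Prop :=
  ∀ ρ ≤ η, ∃ r, IsMaxIdx (R ρ) z r ∧ zrho ρ = z.take r

namespace IsMaxRestriction

variable {a : Type*} {η : Ordinal} {R : Ordinal → List a → List a → Prop} {z : List a}
  {zrho : Ordinal → List a}

theorem exists_eq_take (hzrho : IsMaxRestriction η R z zrho) {ρ : Ordinal} (hρ : ρ ≤ η) :
    ∃ r < z.length, zrho ρ = z.take r := by
  obtain ⟨r, ⟨hr, -, -⟩, he⟩ := hzrho ρ hρ
  exact ⟨r, hr, he⟩

theorem rel (hzrho : IsMaxRestriction η R z zrho) {ρ : Ordinal} (hρ : ρ ≤ η) :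
    R ρ (zrho ρ) z := by
  obtain ⟨r, ⟨-, hR, -⟩, he⟩ := hzrho ρ hρ
  exact he ▸ hR

theorem take_prefix_of_rel (hzrho : IsMaxRestriction η R z zrho) {ρ : Ordinal} (hρ : ρ ≤ η)
    {r : ℕ} (hr : r < z.length) (hR : R ρ (z.take r) z) : z.take r <+: zrho ρ := by
  obtain ⟨r', ⟨-, -, hmax⟩, he⟩ := hzrho ρ hρ
  exact he ▸ List.take_prefix_take_left (hmax r hr hR)

theorem prefix_of_le (hzrho : IsMaxRestriction η R z zrho) (hres : IsResolutionFamily η R)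
    {ρ ρ' : Ordinal} (hρ : ρ ≤ ρ') (hρ' : ρ' ≤ η) : zrho ρ' <+: zrho ρ := by
  obtain ⟨r, hr, he⟩ := hzrho.exists_eq_take hρ'
  rw [he]
  exact hzrho.take_prefix_of_rel (hρ.trans hρ') hr (hres.rel_anti hρ hρ' (he ▸ hzrho.rel hρ'))

theorem exists_lt_prefix_of_isSuccLimit (hzrho : IsMaxRestriction η R z zrho)
    (hres : IsResolutionFamily η R) {ν : Ordinal} (hνη : ν ≤ η) (hν : IsSuccLimit ν) :
    ∃ ρ < ν, zrho ρ <+: zrho ν := by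
  let length : Ordinal → ℕ := fun ρ => (zrho ρ).length
  have hne : (Iio ν).Nonempty := ⟨0, hν.pos⟩
  set ρ₀ := Function.argminOn length (Iio ν) hne
  have hρ₀ν : ρ₀ < ν := Function.argminOn_mem _ _ hne
  have hρ₀η : ρ₀ ≤ η := hρ₀ν.le.trans hνη
  have hstable : ∀ σ, ρ₀ ≤ σ → σ < ν → zrho σ = zrho ρ₀ := fun σ hρ₀σ hσν =>
    have hpre := hzrho.prefix_of_le hres hρ₀σ (hσν.le.trans hνη)
    hpre.eq_of_length (hpre.length_le.antisymm (Function.argminOn_le length (Iio ν) hσν))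
  have hrel : R ν (zrho ρ₀) z := by
    refine (hres.2.2.2 ν hνη hν _ _).mpr fun σ hσν => ?_
    rcases le_or_gt ρ₀ σ with hρ₀σ | hσρ₀
    · exact hstable σ hρ₀σ hσν ▸ hzrho.rel (hσν.le.trans hνη)
    · exact hres.rel_anti hσρ₀.le hρ₀η (hzrho.rel hρ₀η)
  obtain ⟨r, hr, he⟩ := hzrho.exists_eq_take hρ₀η
  exact ⟨ρ₀, hρ₀ν, he ▸ hzrho.take_prefix_of_rel hνη hr (he ▸ hrel)⟩

end IsMaxRestriction

theorem eta_i_is_successor_general {a : Type*}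
    (η : Ordinal) (R : Ordinal → List a → List a → Prop)
    (hres : IsResolutionFamily η R)
    (z : List a)
    -- `zrho ρ` is `z^ρ`, the restriction of `z` to the largest `r < |z|` with `z↾r R^{(ρ)} z`
    (zrho : Ordinal → List a)
    (hzrho : ∀ ρ ≤ η, ∃ r, IsMaxIdx (R ρ) z r ∧ zrho ρ = z.take r)
    -- the enumeration `{z^ρ | ρ ≤ η} = {z^{ξ_i} | 1 ≤ i ≤ n}` with `ξ_1 < ... < ξ_n = η`
    (n : ℕ) (ξ : ℕ → Ordinal)
    (hξη : ∀ i, 1 ≤ i → i ≤ n → ξ i ≤ η) :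
    -- for `1 ≤ i < n`, the initial segment `{ρ ≤ η | z^{ξ_i} ≼ z^ρ}` is a successor
    -- ordinal, i.e. of the form `{ρ | ρ ≤ ν} = Iic ν`
    ∀ i, 1 ≤ i → i < n →
      ∃ ν : Ordinal, {ρ : Ordinal | ρ ≤ η ∧ zrho (ξ i) <+: zrho ρ} = Set.Iic ν := by
  intro i hi hin
  have hmax : IsMaxRestriction η R z zrho := hzrho
  refine IsLowerSet.exists_eq_Iic ?_ ⟨ξ i, hξη i hi hin.le, List.prefix_refl _⟩
    ⟨η, fun ρ hρ => hρ.1⟩ ?_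
  · exact fun ρ ρ' hle hρ => ⟨hle.trans hρ.1, hρ.2.trans (hmax.prefix_of_le hres hle hρ.1)⟩
  · intro ν hν hsub
    have hνη : ν ≤ η := not_lt.mp fun hην => (lt_succ η).not_ge (hsub (hν.succ_lt hην)).1
    obtain ⟨ρ, hρν, hpre⟩ := hmax.exists_lt_prefix_of_isSuccLimit hres hνη hν
    exact ⟨hνη, (hsub hρν).2.trans hpre⟩

theorem eta_i_is_successor {a : Type*} [Fintype a]
    (η : Ordinal) (R : Ordinal → List a → List a → Prop)
    (hres : IsResolutionFamily η R)
    (h0 : ∀ s t : List a, R 0 s t ↔ s <+: t)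
    (z : List a) (hz : z ≠ [])
    -- `zrho ρ` is `z^ρ`, the restriction of `z` to the largest `r < |z|` with `z↾r R^{(ρ)} z`
    (zrho : Ordinal → List a)
    (hzrho : ∀ ρ ≤ η, ∃ r, IsMaxIdx (R ρ) z r ∧ zrho ρ = z.take r)
    -- the enumeration `{z^ρ | ρ ≤ η} = {z^{ξ_i} | 1 ≤ i ≤ n}` with `ξ_1 < ... < ξ_n = η`
    (n : ℕ) (hn : 1 ≤ n) (ξ : ℕ → Ordinal)
    (hξη : ∀ i, 1 ≤ i → i ≤ n → ξ i ≤ η)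
    (hξmono : ∀ i j, 1 ≤ i → i < j → j ≤ n → ξ i < ξ j)
    (hξtop : ξ n = η)
    (henum : ∀ ρ ≤ η, ∃ i, 1 ≤ i ∧ i ≤ n ∧ zrho ρ = zrho (ξ i))
    (hchain : ∀ i, 1 ≤ i → i < n →
      zrho (ξ (i + 1)) <+: zrho (ξ i) ∧ zrho (ξ (i + 1)) ≠ zrho (ξ i)) :
    -- for `1 ≤ i < n`, the initial segment `{ρ ≤ η | z^{ξ_i} ≼ z^ρ}` is a successor
    -- ordinal, i.e. of the form `{ρ | ρ ≤ ν} = Iic ν`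
    ∀ i, 1 ≤ i → i < n →
      ∃ ν : Ordinal, {ρ : Ordinal | ρ ≤ η ∧ zrho (ξ i) <+: zrho ρ} = Set.Iic ν :=
  eta_i_is_successor_general η R hres z zrho hzrho n ξ hξη
end

section
/- Let F₀, F₁ be finite sets and 𝒯 ⊆ F₀ × F₁ such that the associated bipartite graph G_𝒯 (vertices F₀ ⊕ F₁, edges {(f₀,0),(f₁,1)} for (f₀,f₁) ∈ 𝒯) is acyclic. Fix (f₀,f₁) ∈ 𝒯. Define N := {(e₀,e₁) ∈ F₀×F₁ \ {(f₀,f₁)} : (e₀,e₁) ∉ 𝒯 or [e₀ ≠ f₀ and there is no path in G_𝒯 from (e₀,0) to (f₀,0)]}, H := {(e₀,e₁) ∈ 𝒯 \ {(f₀,f₁)} : e₀ ≠ f₀ and the unique path from (e₀,0) to (f₀,0) has penultimate vertex (f₁,1)}, V := {(e₀,e₁) ∈ 𝒯 \ {(f₀,f₁)} : e₀ = f₀, or e₀ ≠ f₀ and the unique path from (e₀,0) to (f₀,0) exists with penultimate vertex ≠ (f₁,1)}. Then for each ε ∈ {0,1}, the projections of H and V to F_ε are disjoint. -/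
/-!
In a forest, paths from two adjacent vertices `x, y ≠ w` to `w` have the same penultimate vertex,
since one of the two paths is the other extended by the edge `xy`. If `(a, b) ∈ H` and
`(a', b) ∈ V`, both `(a, 0)` and `(a', 0)` are adjacent to `(b, 1)`, so the paths from all three
to `(f₀, 0)` end through `(f₁, 1)`; when `a' = f₀` the path from `(b, 1)` is a single edge, forcing
`(a', b) = (f₀, f₁)`. Equal first coordinates give literally the same path.
-/

/-- The bipartite graph `G_𝒯` on `F₀ ⊕ F₁` with an edge between `(f₀,0)` and `(f₁,1)`
iff `(f₀,f₁) ∈ 𝒯`. -/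
def bipGraph {F₀ F₁ : Type*} (𝒯 : Set (F₀ × F₁)) : SimpleGraph (F₀ ⊕ F₁) :=
  SimpleGraph.fromRel (fun x y => ∃ a b, x = Sum.inl a ∧ y = Sum.inr b ∧ (a, b) ∈ 𝒯)

namespace SimpleGraph

variable {V : Type*} {G : SimpleGraph V}

lemma IsAcyclic.eq_of_isPath (hG : G.IsAcyclic) {u w : V} {p q : G.Walk u w}
    (hp : p.IsPath) (hq : q.IsPath) : p = q :=
  Subtype.mk.inj <| hG.subsingleton_path u w |>.elim ⟨p, hp⟩ ⟨q, hq⟩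

lemma IsAcyclic.eq_cons_or_eq_cons_of_adj (hG : G.IsAcyclic) {u v w : V}
    {p : G.Walk u w} {q : G.Walk v w} (hp : p.IsPath) (hq : q.IsPath) (hadj : G.Adj u v) :
    p = .cons hadj q ∨ q = .cons hadj.symm p := by
  by_cases hu : u ∈ q.support
  · have hv : v ∉ p.support := by
      simpa using hG.ne_mem_support_of_support_of_adj_of_isPath hq.reverse hp.reverse hadj.symm
        (by simpa using hu)
    exact .inr <| hG.eq_of_isPath hq (hp.cons hv)
  · exact .inl <| hG.eq_of_isPath hp (hq.cons hu)

lemma IsAcyclic.penultimate_eq_of_adj (hG : G.IsAcyclic) {u v w : V}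
    {p : G.Walk u w} {q : G.Walk v w} (hp : p.IsPath) (hq : q.IsPath) (hadj : G.Adj u v)
    (hu : u ≠ w) (hv : v ≠ w) : p.penultimate = q.penultimate := by
  rcases hG.eq_cons_or_eq_cons_of_adj hp hq hadj with rfl | rfl
  · exact Walk.penultimate_cons_of_not_nil _ _ (Walk.not_nil_of_ne hv)
  · exact (Walk.penultimate_cons_of_not_nil _ _ (Walk.not_nil_of_ne hu)).symm

end SimpleGraph

lemma bipGraph_adj {F₀ F₁ : Type*} {𝒯 : Set (F₀ × F₁)} {a : F₀} {b : F₁} (h : (a, b) ∈ 𝒯) :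
    (bipGraph 𝒯).Adj (Sum.inl a) (Sum.inr b) := by
  simpa [bipGraph] using h

theorem H_V_projections_disjoint_general {F₀ F₁ : Type*}
    (𝒯 : Set (F₀ × F₁)) (hacyc : (bipGraph 𝒯).IsAcyclic)
    (f₀ : F₀) (f₁ : F₁)
    (H V : Set (F₀ × F₁))
    (hH : H = {e | e ∈ 𝒯 ∧ e ≠ (f₀, f₁) ∧ e.1 ≠ f₀ ∧
      ∃ p : (bipGraph 𝒯).Walk (Sum.inl e.1) (Sum.inl f₀),
        p.IsPath ∧ p.getVert (p.length - 1) = Sum.inr f₁})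
    (hV : V = {e | e ∈ 𝒯 ∧ e ≠ (f₀, f₁) ∧ (e.1 = f₀ ∨ (e.1 ≠ f₀ ∧
      ∃ p : (bipGraph 𝒯).Walk (Sum.inl e.1) (Sum.inl f₀),
        p.IsPath ∧ p.getVert (p.length - 1) ≠ Sum.inr f₁))}) :
    Disjoint (Prod.fst '' H) (Prod.fst '' V) ∧
    Disjoint (Prod.snd '' H) (Prod.snd '' V) := by
  subst hH hV
  refine ⟨Set.disjoint_left.2 ?_, Set.disjoint_left.2 ?_⟩
  · rintro _ ⟨⟨a, _⟩, ⟨-, -, ha, p, hp, hpf⟩, rfl⟩ ⟨⟨a', _⟩, ⟨-, -, ha' | ⟨-, q, hq, hqf⟩⟩, rfl⟩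
    · exact ha ha'
    · exact hqf (hacyc.eq_of_isPath hp hq ▸ hpf)
  · rintro _ ⟨⟨a, b⟩, ⟨hab, -, ha, p, hp, hpf⟩, rfl⟩ ⟨⟨a', b'⟩, ⟨ha'b, hne, hV⟩, hb'⟩
    obtain rfl : b = b' := hb'.symm
    have hb : Sum.inr b ≠ Sum.inl f₀ := Sum.inr_ne_inl
    have hreach : (bipGraph 𝒯).Reachable (Sum.inr b) (Sum.inl f₀) := by
      rcases hV with rfl | ⟨-, q, -, -⟩
      · exact (bipGraph_adj ha'b).symm.reachable
      · exact (bipGraph_adj ha'b).symm.reachable.trans q.reachable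
    obtain ⟨r, hr⟩ := hreach.exists_isPath
    have hpr : p.penultimate = r.penultimate :=
      hacyc.penultimate_eq_of_adj hp hr (bipGraph_adj hab) (by simpa using ha) hb
    rcases hV with rfl | ⟨ha', q, hq, hqf⟩
    · have hrb : Sum.inr b = r.penultimate :=
        hacyc.eq_penultimate_of_adj_end hr (bipGraph_adj ha'b) r.start_mem_support
      exact hne (by simpa using hrb.trans (hpr.symm.trans hpf))
    · have hqr : q.penultimate = r.penultimate :=
        hacyc.penultimate_eq_of_adj hq hr (bipGraph_adj ha'b) (by simpa using ha') hb
      exact hqf (hqr.trans (hpr.symm.trans hpf))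

theorem H_V_projections_disjoint {F₀ F₁ : Type*} [Fintype F₀] [Fintype F₁]
    (𝒯 : Set (F₀ × F₁)) (hacyc : (bipGraph 𝒯).IsAcyclic)
    (f₀ : F₀) (f₁ : F₁) (hf : (f₀, f₁) ∈ 𝒯)
    (H V : Set (F₀ × F₁))
    (hH : H = {e | e ∈ 𝒯 ∧ e ≠ (f₀, f₁) ∧ e.1 ≠ f₀ ∧
      ∃ p : (bipGraph 𝒯).Walk (Sum.inl e.1) (Sum.inl f₀),
        p.IsPath ∧ p.getVert (p.length - 1) = Sum.inr f₁})
    (hV : V = {e | e ∈ 𝒯 ∧ e ≠ (f₀, f₁) ∧ (e.1 = f₀ ∨ (e.1 ≠ f₀ ∧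
      ∃ p : (bipGraph 𝒯).Walk (Sum.inl e.1) (Sum.inl f₀),
        p.IsPath ∧ p.getVert (p.length - 1) ≠ Sum.inr f₁))}) :
    Disjoint (Prod.fst '' H) (Prod.fst '' V) ∧
    Disjoint (Prod.snd '' H) (Prod.snd '' V) :=
  H_V_projections_disjoint_general 𝒯 hacyc f₀ f₁ H V hH hV
end

section
/- Let E ⊆ ⋃_q 2^q × 2^q be a test, and T the tree generated by E: T := {(s,t) : s = t = ∅, or ∃q ∃w ∈ 2^{<ω} (s,t) = (s_q0w, t_q1w)} where E = {(s_q,t_q) : q ∈ ω}. Then for every p ∈ ω, the bipartite graph G_{𝒯_p} associated with 𝒯_p := T ∩ (2^p × 2^p) is acyclic. -/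
def tri (m : ℕ) : ℕ := ∑ k ∈ Finset.range (m + 1), k
noncomputable def Mfn (q : ℕ) : ℕ := Nat.findGreatest (fun m => tri m ≤ q) q
/-- The first component `(q)₀` of the inverse of the pairing `⟨n,p⟩ = tri (n+p) + p`. -/
noncomputable def fst0 (q : ℕ) : ℕ := Mfn q + tri (Mfn q) - q

/-- A test: `e q = (s_q, t_q)` enumerates `E`, with the conditions (a), (b), (c). -/
noncomputable def IsTest (e : ℕ → List Bool × List Bool) : Prop :=
  -- (a): `(s_q, t_q)` is the unique element of `E` on level `q`
  (∀ q, (e q).1.length = q ∧ (e q).2.length = q) ∧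
  (∀ q q', (e q').1.length = (e q).1.length → e q' = e q) ∧
  -- (b)
  (∀ m p : ℕ, ∀ u : List Bool, ∃ v : List Bool, ∃ q : ℕ,
    e q = ((e p).1 ++ false :: (u ++ v), (e p).2 ++ true :: (u ++ v)) ∧
    fst0 (((e p).2 ++ true :: (u ++ v)).length - 1) = m) ∧
  -- (c)
  (∀ n > 0, ∃ q < n, ∃ w : List Bool,
    (e n).1 = (e q).1 ++ false :: w ∧ (e n).2 = (e q).2 ++ true :: w)

/-- The tree generated by a test. -/
def treeOf (e : ℕ → List Bool × List Bool) : Set (List Bool × List Bool) :=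
  {x | (x.1 = [] ∧ x.2 = []) ∨ ∃ q w,
    x.1 = (e q).1 ++ false :: w ∧ x.2 = (e q).2 ++ true :: w}

/-!
Label each edge `s(inl (s_q ++ false :: w), inr (t_q ++ true :: w))` of a level by `q`. On a
cycle, take an edge of maximal label `Q`, with suffix `w₀`. Every edge of the cycle with label
`q < Q` joins two words that agree from position `Q` on, and every edge with label `Q` joins words
whose suffixes from position `Q` are `false :: w` and `true :: w`. Hence the predicate "the suffix
from position `Q` is `true :: w₀`" changes across exactly one edge of the cycle, which is
impossible: an edge of a cycle is never a bridge.
-/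

open SimpleGraph

theorem SimpleGraph.Reachable.apply_eq_of_forall_adj {V α : Type*} {G : SimpleGraph V}
    {f : V → α} (hf : ∀ a b, G.Adj a b → f a = f b) {x y : V} (h : G.Reachable x y) :
    f x = f y := by
  rw [reachable_iff_reflTransGen] at h
  induction h with
  | refl => rfl
  | tail _ hab ih => exact ih.trans (hf _ _ hab)

theorem SimpleGraph.Walk.IsCycle.apply_eq_apply_of_mem_edges {V α : Type*} {G : SimpleGraph V}
    {u : V} {c : G.Walk u u} (hc : c.IsCycle) (f : V → α) {x y : V} (hxy : s(x, y) ∈ c.edges)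
    (hf : ∀ a b, s(a, b) ∈ c.edges → s(a, b) ≠ s(x, y) → f a = f b) : f x = f y := by
  let H := fromEdgeSet {z | z ∈ c.edges}
  have hcH : ∀ z ∈ c.edges, z ∈ H.edgeSet := fun z hz => by
    rw [edgeSet_fromEdgeSet]
    exact ⟨hz, G.not_isDiag_of_mem_edgeSet (c.edges_subset_edgeSet hz)⟩
  have hreach : (H.deleteEdges {s(x, y)}).Reachable x y :=
    (adj_and_reachable_delete_edges_iff_exists_cycle.mpr
      ⟨u, c.transfer H hcH, hc.transfer hcH, by rwa [Walk.edges_transfer]⟩).2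
  refine hreach.apply_eq_of_forall_adj fun a b hab => ?_
  rw [deleteEdges_adj, fromEdgeSet_adj] at hab
  exact hf a b hab.1.1 hab.2

theorem List.drop_append_cons_eq_drop_append_cons {α : Type*} {l₁ l₂ w : List α} (a b : α)
    {n : ℕ} (hl : l₁.length = l₂.length) (hn : l₁.length < n) :
    (l₁ ++ a :: w).drop n = (l₂ ++ b :: w).drop n := by
  obtain ⟨k, hk⟩ : ∃ k, n - l₁.length = k + 1 := ⟨n - l₁.length - 1, by omega⟩
  simp only [List.drop_append, List.drop_eq_nil_of_le hn.le,
    List.drop_eq_nil_of_le (hl ▸ hn.le : l₂.length ≤ n), ← hl, hk, List.drop_succ_cons]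

theorem mem_edgeSet_bipGraph {F₀ F₁ : Type*} {𝒯 : Set (F₀ × F₁)} {z : Sym2 (F₀ ⊕ F₁)}
    (hz : z ∈ (bipGraph 𝒯).edgeSet) : ∃ a b, (a, b) ∈ 𝒯 ∧ z = s(.inl a, .inr b) := by
  induction z using Sym2.ind with
  | h x y =>
    obtain ⟨-, ⟨a, b, rfl, rfl, hab⟩ | ⟨a, b, rfl, rfl, hab⟩⟩ := hz
    · exact ⟨a, b, hab, rfl⟩
    · exact ⟨a, b, hab, Sym2.eq_swap⟩

def treeLevel (e : ℕ → List Bool × List Bool) (p : ℕ) : Set (List Bool × List Bool) :=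
  {x | x ∈ treeOf e ∧ x.1.length = p ∧ x.2.length = p}

def treeEdge (e : ℕ → List Bool × List Bool) (q : ℕ) (w : List Bool) :
    Sym2 (List Bool ⊕ List Bool) :=
  s(.inl ((e q).1 ++ false :: w), .inr ((e q).2 ++ true :: w))

section

variable {e : ℕ → List Bool × List Bool}

theorem eq_root_of_mem_edgeSet_treeLevel_zero {z : Sym2 (List Bool ⊕ List Bool)}
    (hz : z ∈ (bipGraph (treeLevel e 0)).edgeSet) : z = s(.inl [], .inr []) := by
  obtain ⟨a, b, ⟨-, ha, hb⟩, rfl⟩ := mem_edgeSet_bipGraph hz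
  obtain ⟨rfl⟩ : a = [] := List.length_eq_zero_iff.mp ha
  obtain ⟨rfl⟩ : b = [] := List.length_eq_zero_iff.mp hb
  rfl

theorem exists_treeEdge_of_mem_edgeSet_treeLevel (hlen : ∀ q, (e q).1.length = q)
    {p : ℕ} (hp : 0 < p) {z : Sym2 (List Bool ⊕ List Bool)}
    (hz : z ∈ (bipGraph (treeLevel e p)).edgeSet) : ∃ q < p, ∃ w, z = treeEdge e q w := by
  obtain ⟨a, b, ⟨htree, hpa, -⟩, rfl⟩ := mem_edgeSet_bipGraph hz
  rcases htree with ⟨ha, -⟩ | ⟨q, w, ha, hb⟩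
  · obtain ⟨rfl⟩ : a = [] := ha
    simp only [List.length_nil] at hpa
    omega
  · obtain ⟨rfl⟩ : a = _ := ha
    obtain ⟨rfl⟩ : b = _ := hb
    refine ⟨q, ?_, w, rfl⟩
    simp only [List.length_append, List.length_cons, hlen] at hpa
    omega

theorem treeEdge_notMem_edges_of_isCycle
    (hlen : ∀ q, (e q).1.length = q ∧ (e q).2.length = q)
    {G : SimpleGraph (List Bool ⊕ List Bool)} {u : List Bool ⊕ List Bool} {c : G.Walk u u}
    (hc : c.IsCycle) {Q : ℕ} (hle : ∀ z ∈ c.edges, ∃ q ≤ Q, ∃ w, z = treeEdge e q w)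
    (w₀ : List Bool) : treeEdge e Q w₀ ∉ c.edges := by
  intro hQ
  let f : List Bool ⊕ List Bool → Prop := fun x => (Sum.elim id id x).drop Q = true :: w₀
  have hsplit : ∀ w, ((e Q).1 ++ false :: w).drop Q = false :: w ∧
      ((e Q).2 ++ true :: w).drop Q = true :: w :=
    fun w => ⟨List.drop_left' (hlen Q).1, List.drop_left' (hlen Q).2⟩
  refine absurd (hc.apply_eq_apply_of_mem_edges f hQ fun a b hab hne => ?_) ?_
  · obtain ⟨q, hq, w, hw⟩ := hle _ hab
    suffices f (.inl ((e q).1 ++ false :: w)) = f (.inr ((e q).2 ++ true :: w)) by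
      rcases Sym2.eq_iff.mp hw with ⟨rfl, rfl⟩ | ⟨rfl, rfl⟩
      exacts [this, this.symm]
    rcases hq.lt_or_eq with hq | rfl
    · simp only [f, Sum.elim_inl, Sum.elim_inr, id]
      rw [List.drop_append_cons_eq_drop_append_cons false true
        ((hlen q).1.trans (hlen q).2.symm) (by rw [(hlen q).1]; exact hq)]
    · have hw₀ : w ≠ w₀ := by
        rintro rfl
        exact hne hw
      simp [f, (hsplit w).1, (hsplit w).2, hw₀]
  · simp [f, (hsplit w₀).1, (hsplit w₀).2]

end

theorem test_tree_has_acyclic_levels (e : ℕ → List Bool × List Bool)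
    (he : IsTest e) (p : ℕ) :
    (bipGraph {x | x ∈ treeOf e ∧ x.1.length = p ∧ x.2.length = p}).IsAcyclic := by
  intro u c hc
  obtain ⟨z, hz⟩ := List.exists_mem_of_ne_nil c.edges (by simpa using hc.not_nil)
  rcases Nat.eq_zero_or_pos p with rfl | hp
  · have hroot : ∀ z ∈ c.edges, z = s(.inl [], .inr []) := fun z hz =>
      eq_root_of_mem_edgeSet_treeLevel_zero (c.edges_subset_edgeSet hz)
    have := hc.apply_eq_apply_of_mem_edges Sum.isLeft (hroot z hz ▸ hz)
      fun a b hab hne => absurd (hroot _ hab) hne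
    simp at this
  · have hlabel : ∀ z ∈ c.edges, ∃ q < p, ∃ w, z = treeEdge e q w := fun z hz =>
      exists_treeEdge_of_mem_edgeSet_treeLevel (fun q => (he.1 q).1) hp
        (c.edges_subset_edgeSet hz)
    let S := {q | q < p ∧ ∃ w, treeEdge e q w ∈ c.edges}
    have hS : S.Nonempty := by
      obtain ⟨q, hq, w, rfl⟩ := hlabel z hz
      exact ⟨q, hq, w, hz⟩
    have hbdd : BddAbove S := ⟨p, fun q hq => hq.1.le⟩
    obtain ⟨-, w₀, hQ⟩ := Nat.sSup_mem hS hbdd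
    refine treeEdge_notMem_edges_of_isCycle he.1 hc (fun z hz => ?_) w₀ hQ
    obtain ⟨q, hq, w, rfl⟩ := hlabel z hz
    exact ⟨q, le_csSup hbdd ⟨hq, w, hz⟩, w, rfl⟩
end

section
/- There exists a test: a set E ⊆ ⋃_{q∈ω} 2^q × 2^q satisfying: (a) for each q ∈ ω there is a unique (s_q,t_q) ∈ E ∩ (2^q × 2^q); (b) for all m,p ∈ ω and u ∈ 2^{<ω} there is v ∈ 2^{<ω} with (s_p0uv, t_p1uv) ∈ E and (|t_p1uv|-1)₀ = m; (c) for each n > 0 there exist q < n and w ∈ 2^{<ω} with s_n = s_q0w and t_n = t_q1w. -/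
/-!
The test is built by recursion: `(s_{q+1}, t_{q+1})` extends `(s_a, t_a)` by `0 w`, resp. `1 w`,
where the parent index `a` and the word `w` are read off `q` through the pairing. Condition (c)
holds by construction. For (b), the stage `q = ⟨m, ⟨p, code u⟩⟩` has parent `p` and a word
starting with `u`, and `t_{q+1}` has length `q + 1`, so `(|t_{q+1}| - 1)₀ = m`.
-/

section Pairing

theorem tri_succ (m : ℕ) : tri (m + 1) = tri m + (m + 1) := by
  simp [tri, Finset.sum_range_succ]

theorem tri_strictMono : StrictMono tri :=
  strictMono_nat_of_lt_succ fun m => by rw [tri_succ]; omega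

theorem le_tri (m : ℕ) : m ≤ tri m := tri_strictMono.id_le m

def triPair (n p : ℕ) : ℕ := tri (n + p) + p

/-- `(q)₁`, the second component of the inverse of `triPair`. -/
noncomputable def snd0 (q : ℕ) : ℕ := q - tri (Mfn q)

theorem tri_Mfn_le (q : ℕ) : tri (Mfn q) ≤ q :=
  Nat.findGreatest_spec (P := fun m => tri m ≤ q) (Nat.zero_le q) (by simp [tri])

theorem Mfn_eq_of_tri_le_of_lt {q M : ℕ} (hle : tri M ≤ q) (hlt : q < tri (M + 1)) :
    Mfn q = M :=
  Nat.findGreatest_eq_iff.mpr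
    ⟨(le_tri M).trans hle, fun _ => hle, fun _ hM _ hn =>
      absurd (hlt.trans_le (tri_strictMono.monotone hM)) (not_lt.mpr hn)⟩

theorem Mfn_triPair (n p : ℕ) : Mfn (triPair n p) = n + p :=
  Mfn_eq_of_tri_le_of_lt (Nat.le_add_right _ _) (by rw [triPair, tri_succ]; omega)

theorem fst0_triPair (n p : ℕ) : fst0 (triPair n p) = n := by
  rw [fst0, Mfn_triPair, triPair]; omega

theorem snd0_triPair (n p : ℕ) : snd0 (triPair n p) = p := by
  rw [snd0, Mfn_triPair, triPair]; omega

theorem snd0_le (q : ℕ) : snd0 q ≤ q := Nat.sub_le _ _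

theorem fst0_add_snd0_le (q : ℕ) : fst0 q + snd0 q ≤ q := by
  have := tri_Mfn_le q
  have : Mfn q ≤ q := Nat.findGreatest_le q
  rw [fst0, snd0]; omega

end Pairing

section Construction

open Encodable

theorem length_getD_decode₂_le {α : Type*} [Encodable α] (n : ℕ) :
    ((decode₂ (List α) n).getD []).length ≤ n := by
  cases h : decode₂ (List α) n with
  | none => simp
  | some l => exact (length_le_encode l).trans_eq (mem_decode₂.mp h)

noncomputable def stageParent (q : ℕ) : ℕ := fst0 (snd0 q)

/-- The word `ψ([(q)₁]₁)` inserted at stage `q + 1`; any `ψ` onto the words with `|ψ(r)| ≤ r`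
will do. -/
noncomputable def stageWord (q : ℕ) : List Bool := (decode₂ (List Bool) (snd0 (snd0 q))).getD []

noncomputable def stageTail (q : ℕ) : List Bool :=
  stageWord q ++ List.replicate (q - stageParent q - (stageWord q).length) false

theorem stageParent_add_length_stageWord_le (q : ℕ) :
    stageParent q + (stageWord q).length ≤ q := by
  have hword : (stageWord q).length ≤ snd0 (snd0 q) := length_getD_decode₂_le _
  have := fst0_add_snd0_le (snd0 q)
  have := snd0_le q
  rw [stageParent]; omega

theorem stageParent_le (q : ℕ) : stageParent q ≤ q :=
  (Nat.le_add_right _ _).trans (stageParent_add_length_stageWord_le q)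

theorem length_stageTail (q : ℕ) : (stageTail q).length = q - stageParent q := by
  have := stageParent_add_length_stageWord_le q
  rw [stageTail, List.length_append, List.length_replicate]; omega

theorem stageParent_triPair (m p : ℕ) (u : List Bool) :
    stageParent (triPair m (triPair p (encode u))) = p := by
  rw [stageParent, snd0_triPair, fst0_triPair]

theorem stageWord_triPair (m p : ℕ) (u : List Bool) :
    stageWord (triPair m (triPair p (encode u))) = u := by
  rw [stageWord, snd0_triPair, snd0_triPair, decode₂_encode, Option.getD_some]

/-- `canonicalTest q = (s_q, t_q)`. -/
noncomputable def canonicalTest : ℕ → List Bool × List Bool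
  | 0 => ([], [])
  | q + 1 =>
    ((canonicalTest (stageParent q)).1 ++ false :: stageTail q,
      (canonicalTest (stageParent q)).2 ++ true :: stageTail q)
decreasing_by all_goals exact Nat.lt_succ_of_le (stageParent_le q)

theorem length_canonicalTest (q : ℕ) :
    (canonicalTest q).1.length = q ∧ (canonicalTest q).2.length = q := by
  induction q using Nat.strong_induction_on with
  | _ q ih =>
    match q with
    | 0 => simp [canonicalTest]
    | q + 1 =>
      have hparent := ih (stageParent q) (Nat.lt_succ_of_le (stageParent_le q))
      have := stageParent_le q
      rw [canonicalTest]
      simp only [List.length_append, List.length_cons, hparent.1, hparent.2, length_stageTail]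
      omega

theorem exists_canonicalTest_extending (m p : ℕ) (u : List Bool) :
    ∃ v : List Bool, canonicalTest (triPair m (triPair p (encode u)) + 1) =
      ((canonicalTest p).1 ++ false :: (u ++ v), (canonicalTest p).2 ++ true :: (u ++ v)) :=
  ⟨_, by rw [canonicalTest, stageTail, stageParent_triPair, stageWord_triPair]⟩

end Construction

theorem exists_test : ∃ e : ℕ → List Bool × List Bool, IsTest e := by
  refine ⟨canonicalTest, length_canonicalTest, ?_, ?_, ?_⟩
  · intro q q' h
    rw [(length_canonicalTest q').1, (length_canonicalTest q).1] at h
    rw [h]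
  · intro m p u
    obtain ⟨v, hv⟩ := exists_canonicalTest_extending m p u
    refine ⟨v, _, hv, ?_⟩
    have ht := congrArg Prod.snd hv
    dsimp only at ht
    rw [← ht, (length_canonicalTest _).2, Nat.add_sub_cancel, fst0_triPair]
  · intro n hn
    obtain ⟨q, rfl⟩ : ∃ q, n = q + 1 := ⟨n - 1, by omega⟩
    exact ⟨stageParent q, Nat.lt_succ_of_le (stageParent_le q), stageTail q,
      by rw [canonicalTest], by rw [canonicalTest]⟩
end

section
/- Let X be a Polish space and σ a finer Polish topology on X. Then there is a dense G_δ subset G of (X, original topology) on which the two topologies coincide (the identity map (G,σ↾G) → (G, original↾G) is a homeomorphism). -/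
/-!
Every σ-open set is σ-Borel, hence τ-Borel (two comparable Polish topologies have the same Borel
sets), hence has the Baire property for τ: it agrees with a τ-open set off a τ-meagre set. Doing
this for the countably many sets of a σ-basis and discarding the countably many meagre exceptions
leaves a τ-comeagre set, which contains a dense Gδ set `G` on which every basic σ-open set is
τ-open.
-/

open Set TopologicalSpace MeasureTheory Topology

theorem baireMeasurableSet_of_isOpen_of_le {X : Type*} {σ τ : TopologicalSpace X}
    (hσ : @PolishSpace X σ) (hτ : @PolishSpace X τ) (hle : σ ≤ τ) {U : Set X}
    (hU : IsOpen[σ] U) : @BaireMeasurableSet X τ U :=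
  @MeasurableSet.baireMeasurableSet X τ U (@borel X τ) (@BorelSpace.mk X τ (@borel X τ) rfl) <|
    borel_eq_borel_of_le hσ hτ hle ▸ MeasurableSpace.measurableSet_generateFrom hU

theorem BaireMeasurableSet.exists_dense_isGδ_isOpen_preimage_val {α ι : Type*}
    [TopologicalSpace α] [BaireSpace α] [Countable ι] {s : ι → Set α}
    (hs : ∀ i, BaireMeasurableSet (s i)) :
    ∃ G : Set α, Dense G ∧ IsGδ G ∧ ∀ i, IsOpen ((Subtype.val : G → α) ⁻¹' s i) := by
  choose u hu_open hsu using fun i => (hs i).residualEq_isOpen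
  have hgood : ∀ᶠ x in residual α, ∀ i, x ∈ s i ↔ x ∈ u i :=
    eventually_countable_forall.2 fun i => (hsu i).mono fun _ => iff_of_eq
  obtain ⟨G, hG_good, hGδ, hG_dense⟩ := mem_residual.1 hgood
  refine ⟨G, hG_dense, hGδ, fun i => isOpen_induced_iff.2 ⟨u i, hu_open i, ?_⟩⟩
  ext x
  exact ((hG_good x.2) i).symm

theorem induced_generateFrom_eq_induced_of_le {X Y : Type*} {τ : TopologicalSpace X}
    {b : Set (Set X)} (hle : generateFrom b ≤ τ) (f : Y → X)
    (hb : ∀ U ∈ b, IsOpen[induced f τ] (f ⁻¹' U)) :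
    induced f (generateFrom b) = induced f τ := by
  refine le_antisymm (induced_mono hle) ?_
  rw [induced_generateFrom_eq]
  exact le_generateFrom fun _ ⟨U, hU, hfU⟩ => hfU ▸ hb U hU

theorem finer_polish_topology_agrees_on_dense_Gdelta
    {X : Type*} (τ σ : TopologicalSpace X)
    (hfine : σ ≤ τ) (hτ : @PolishSpace X τ) (hσ : @PolishSpace X σ) :
    ∃ G : Set X, @Dense X τ G ∧ @IsGδ X τ G ∧
      TopologicalSpace.induced (Subtype.val : G → X) σ =
        TopologicalSpace.induced (Subtype.val : G → X) τ := by
  obtain ⟨b, hb_countable, -, hb⟩ :=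
    @exists_countable_basis X σ hσ.toSecondCountableTopology
  have := hb_countable.to_subtype
  have hb_baire (U : b) : @BaireMeasurableSet X τ U :=
    baireMeasurableSet_of_isOpen_of_le hσ hτ hfine (hb.isOpen U.2)
  obtain ⟨G, hG_dense, hGδ, hG_open⟩ :=
    @BaireMeasurableSet.exists_dense_isGδ_isOpen_preimage_val X b τ _ _ _ hb_baire
  refine ⟨G, hG_dense, hGδ, ?_⟩
  obtain rfl := hb.eq_generateFrom
  exact induced_generateFrom_eq_induced_of_le hfine _ fun U hU => hG_open ⟨U, hU⟩
end
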